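/- arXiv:2206.06332 — 8 statements merged into one kernel-verified Lean document; each statement's English description precedes it below -/
import Mathlib

section
/- A pure quaternion q has an inverse with respect to the spherical product (i.e., there exists a pure quaternion q' with q ×ₛ q' = k) if and only if q = c·k for some nonzero real number c; in that case the inverse is (1/c)·k. -/
/-! If `q ×ₛ q' = k`, the radii multiply to `1` and the polar angles satisfy `cos (φ + φ') = 1`.
As `φ, φ' ∈ [0, π]` have nonnegative sines, `cos (φ + φ') = cos φ cos φ' - sin φ sin φ'` forces
`|cos φ| = 1`, i.e. `|q.imK| = ‖q‖`, so `q` lies on the `k`-axis. Conversely `c • k` and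
`c⁻¹ • k` have the same polar angle `0` or `π`, so their angles add up to `0` or `2π`. -/

open scoped Quaternion
open Bornology

noncomputable def sCoord (ρ θ φ : ℝ) : ℍ[ℝ] :=
  ⟨0, ρ * (Real.sin φ * Real.cos θ), ρ * (Real.sin φ * Real.sin θ), ρ * Real.cos φ⟩

noncomputable def sphRho (q : ℍ[ℝ]) : ℝ := ‖q‖

noncomputable def sphTheta (q : ℍ[ℝ]) : ℝ :=
  if q.imI = 0 ∧ q.imJ = 0 then 0
  else if Complex.arg ⟨q.imI, q.imJ⟩ < 0 then Complex.arg ⟨q.imI, q.imJ⟩ + 2 * Real.pi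
  else Complex.arg ⟨q.imI, q.imJ⟩

open Classical in
noncomputable def sphPhi (q : ℍ[ℝ]) : ℝ :=
  if q = 0 then 0 else Real.arccos (q.imK / ‖q‖)

noncomputable def sprod (q₁ q₂ : ℍ[ℝ]) : ℍ[ℝ] :=
  sCoord (sphRho q₁ * sphRho q₂) (sphTheta q₁ + sphTheta q₂) (sphPhi q₁ + sphPhi q₂)

noncomputable def spow (n : ℕ) (q : ℍ[ℝ]) : ℍ[ℝ] :=
  sCoord (sphRho q ^ n) (n * sphTheta q) (n * sphPhi q)

/-- The bare literal `(⟨0, 0, 0, 1⟩ : ℍ[ℝ])` gets the type `QuaternionAlgebra ℝ (-1) 0 (-1)` that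
the definition `ℍ[ℝ]` unfolds to, where the norm of `ℍ[ℝ]` is not found and rewriting fails;
naming the constant fixes its type. -/
def quaternionK : ℍ[ℝ] := ⟨0, 0, 0, 1⟩

local notation "𝐤" => quaternionK

@[simp] lemma re_quaternionK : 𝐤.re = 0 := rfl
@[simp] lemma imI_quaternionK : 𝐤.imI = 0 := rfl
@[simp] lemma imJ_quaternionK : 𝐤.imJ = 0 := rfl
@[simp] lemma imK_quaternionK : 𝐤.imK = 1 := rfl

open Real

namespace Quaternion

lemma sq_norm_eq_sum_sq (q : ℍ[ℝ]) : ‖q‖ ^ 2 = q.re ^ 2 + q.imI ^ 2 + q.imJ ^ 2 + q.imK ^ 2 := by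
  rw [sq, ← normSq_eq_norm_mul_self, normSq_def']

lemma abs_imK_le_norm (q : ℍ[ℝ]) : |q.imK| ≤ ‖q‖ := by
  rw [← abs_norm, ← sq_le_sq, sq_norm_eq_sum_sq]
  nlinarith [sq_nonneg q.re, sq_nonneg q.imI, sq_nonneg q.imJ]

lemma eq_imK_smul_of_abs_imK_eq_norm {q : ℍ[ℝ]} (h : |q.imK| = ‖q‖) : q = q.imK • 𝐤 := by
  have hsq := sq_norm_eq_sum_sq q
  rw [← h, sq_abs] at hsq
  ext <;> simp <;> nlinarith [sq_nonneg q.re, sq_nonneg q.imI, sq_nonneg q.imJ]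

end Quaternion

open Quaternion

lemma sCoord_eq_k_iff {ρ θ φ : ℝ} (hρ : 0 ≤ ρ) :
    sCoord ρ θ φ = 𝐤 ↔ ρ = 1 ∧ cos φ = 1 := by
  constructor
  · intro h
    obtain ⟨-, hi, hj, hk⟩ := QuaternionAlgebra.ext_iff.mp h
    simp only [sCoord, imI_quaternionK, imJ_quaternionK, imK_quaternionK] at hi hj hk
    have hsin : ρ * sin φ = 0 := by
      apply pow_eq_zero_iff two_ne_zero |>.mp
      linear_combination -(ρ * sin φ) ^ 2 * sin_sq_add_cos_sq θ + ρ * sin φ * cos θ * hi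
        + ρ * sin φ * sin θ * hj
    have hρ1 : ρ = 1 := by nlinarith [sin_sq_add_cos_sq φ, sq_nonneg (ρ - 1)]
    subst hρ1
    exact ⟨rfl, by simpa using hk⟩
  · rintro ⟨rfl, hcos⟩
    have hsin : sin φ = 0 := by nlinarith [sin_sq_add_cos_sq φ]
    ext <;> simp [sCoord, hsin, hcos]

lemma sphPhi_mem_Icc (q : ℍ[ℝ]) : sphPhi q ∈ Set.Icc 0 π := by
  unfold sphPhi
  split_ifs
  · exact ⟨le_rfl, pi_nonneg⟩
  · exact ⟨arccos_nonneg _, arccos_le_pi _⟩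

lemma cos_sphPhi {q : ℍ[ℝ]} (hq : q ≠ 0) : cos (sphPhi q) = q.imK / ‖q‖ := by
  have hbound : |q.imK / ‖q‖| ≤ 1 := by
    rw [abs_div, abs_norm]
    exact div_le_one_of_le₀ (abs_imK_le_norm q) (norm_nonneg q)
  rw [sphPhi, if_neg hq, cos_arccos (abs_le.mp hbound).1 (abs_le.mp hbound).2]

lemma abs_cos_eq_one_of_cos_add_eq_one {a b : ℝ} (ha : a ∈ Set.Icc 0 π) (hb : b ∈ Set.Icc 0 π)
    (h : cos (a + b) = 1) : |cos a| = 1 := by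
  have hsa := sin_nonneg_of_nonneg_of_le_pi ha.1 ha.2
  have hsb := sin_nonneg_of_nonneg_of_le_pi hb.1 hb.2
  have hca := abs_cos_le_one a
  have hcb := abs_cos_le_one b
  rw [cos_add] at h
  have hprod : |cos a| * |cos b| = 1 := by
    refine le_antisymm (mul_le_one₀ hca (abs_nonneg _) hcb) ?_
    rw [← abs_mul]
    nlinarith [le_abs_self (cos a * cos b), mul_nonneg hsa hsb]
  nlinarith [abs_nonneg (cos a)]

lemma eq_smul_k_of_sprod_eq_k {q q' : ℍ[ℝ]} (h : sprod q q' = 𝐤) : ∃ c : ℝ, c ≠ 0 ∧ q = c • 𝐤 := by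
  obtain ⟨hrho, hcos⟩ := (sCoord_eq_k_iff (mul_nonneg (norm_nonneg q) (norm_nonneg q'))).mp h
  have hq : ‖q‖ ≠ 0 := left_ne_zero_of_mul_eq_one hrho
  have hcosq := abs_cos_eq_one_of_cos_add_eq_one (sphPhi_mem_Icc q) (sphPhi_mem_Icc q') hcos
  rw [cos_sphPhi (norm_ne_zero_iff.mp hq), abs_div, abs_norm, div_eq_one_iff_eq hq] at hcosq
  refine ⟨q.imK, fun h0 => hq ?_, eq_imK_smul_of_abs_imK_eq_norm hcosq⟩
  rw [← hcosq, h0, abs_zero]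

lemma sphRho_smul_k (c : ℝ) : sphRho (c • 𝐤) = |c| := by
  rw [sphRho, ← sq_eq_sq₀ (norm_nonneg _) (abs_nonneg c), sq_norm_eq_sum_sq]
  simp

lemma sphPhi_smul_k {c : ℝ} (hc : c ≠ 0) : sphPhi (c • 𝐤) = arccos (c / |c|) := by
  have hne : c • 𝐤 ≠ 0 := fun h => hc (by simpa using congrArg QuaternionAlgebra.imK h)
  rw [sphPhi, if_neg hne, ← sphRho, sphRho_smul_k, imK_smul, imK_quaternionK, smul_eq_mul, mul_one]

lemma sprod_smul_k_one_div_smul_k {c : ℝ} (hc : c ≠ 0) : sprod (c • 𝐤) ((1 / c) • 𝐤) = 𝐤 := by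
  have hrho : sphRho (c • 𝐤) * sphRho ((1 / c) • 𝐤) = 1 := by
    rw [sphRho_smul_k, sphRho_smul_k, ← abs_mul, mul_one_div_cancel hc, abs_one]
  unfold sprod
  rw [sCoord_eq_k_iff (hrho.symm ▸ zero_le_one)]
  refine ⟨hrho, ?_⟩
  rcases hc.lt_or_gt with hneg | hpos
  · have hneg' : 1 / c < 0 := one_div_neg.mpr hneg
    rw [sphPhi_smul_k hneg.ne, sphPhi_smul_k hneg'.ne, abs_of_neg hneg, abs_of_neg hneg',
      div_neg_self hneg.ne, div_neg_self hneg'.ne, arccos_neg_one, cos_add_pi, cos_pi, neg_neg]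
  · have hpos' : 0 < 1 / c := one_div_pos.mpr hpos
    rw [sphPhi_smul_k hpos.ne', sphPhi_smul_k hpos'.ne', abs_of_pos hpos, abs_of_pos hpos',
      div_self hpos.ne', div_self hpos'.ne', arccos_one, add_zero, cos_zero]

theorem sprod_inverse_iff_general (q : ℍ[ℝ]) :
    ((∃ q' : ℍ[ℝ], q'.re = 0 ∧ sprod q q' = (⟨0, 0, 0, 1⟩ : ℍ[ℝ])) ↔
      ∃ c : ℝ, c ≠ 0 ∧ q = c • (⟨0, 0, 0, 1⟩ : ℍ[ℝ])) ∧
    (∀ c : ℝ, c ≠ 0 → q = c • (⟨0, 0, 0, 1⟩ : ℍ[ℝ]) →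
      sprod q ((1 / c) • (⟨0, 0, 0, 1⟩ : ℍ[ℝ])) = (⟨0, 0, 0, 1⟩ : ℍ[ℝ])) := by
  have inverse : ∀ c : ℝ, c ≠ 0 → q = c • 𝐤 → sprod q ((1 / c) • 𝐤) = 𝐤 := by
    rintro c hc rfl
    exact sprod_smul_k_one_div_smul_k hc
  exact ⟨⟨fun ⟨_, _, h⟩ => eq_smul_k_of_sprod_eq_k h,
    fun ⟨c, hc, hqc⟩ => ⟨(1 / c) • 𝐤, by simp, inverse c hc hqc⟩⟩, inverse⟩

/-- A pure quaternion has an inverse for the spherical product iff it is a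
nonzero real multiple of k, in which case the inverse is (1/c) • k. -/
theorem sprod_inverse_iff (q : ℍ[ℝ]) (hq : q.re = 0) :
    ((∃ q' : ℍ[ℝ], q'.re = 0 ∧ sprod q q' = (⟨0, 0, 0, 1⟩ : ℍ[ℝ])) ↔
      ∃ c : ℝ, c ≠ 0 ∧ q = c • (⟨0, 0, 0, 1⟩ : ℍ[ℝ])) ∧
    (∀ c : ℝ, c ≠ 0 → q = c • (⟨0, 0, 0, 1⟩ : ℍ[ℝ]) →
      sprod q ((1 / c) • (⟨0, 0, 0, 1⟩ : ℍ[ℝ])) = (⟨0, 0, 0, 1⟩ : ℍ[ℝ])) :=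
  sprod_inverse_iff_general q
end

section
/- The spherical product on pure quaternions is not associative: for q1 = (√2/2)j − (√2/2)k and q2 = j, one has q2 ×ₛ (q1 ×ₛ q1) = −k while (q2 ×ₛ q1) ×ₛ q1 = −j. -/
open scoped Quaternion
open Bornology

lemma norm_mk' (q : ℍ[ℝ]) : ‖q‖ = Real.sqrt (q.re^2+q.imI^2+q.imJ^2+q.imK^2) := by
  rw [norm_eq_sqrt_real_inner, Quaternion.inner_self]
  rw [Quaternion.normSq_def']

lemma ne_zero_of_imI {q : ℍ[ℝ]} (h : q.imI ≠ 0) : q ≠ 0 :=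
  fun hq => h (by rw [hq]; rfl)

lemma ne_zero_of_imJ {q : ℍ[ℝ]} (h : q.imJ ≠ 0) : q ≠ 0 :=
  fun hq => h (by rw [hq]; rfl)

lemma theta_pos_I {q : ℍ[ℝ]} (h : 0 < q.imI) (h2 : q.imJ = 0) : sphTheta q = 0 := by
  have harg : Complex.arg ⟨q.imI, q.imJ⟩ = 0 :=
    Complex.arg_eq_zero_iff.2 ⟨le_of_lt h, h2⟩
  rw [sphTheta, if_neg (fun hc => h.ne' hc.1), harg, if_neg (lt_irrefl 0)]

lemma theta_pos_J {q : ℍ[ℝ]} (h : q.imI = 0) (h2 : 0 < q.imJ) : sphTheta q = Real.pi / 2 := by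
  have harg : Complex.arg ⟨q.imI, q.imJ⟩ = Real.pi / 2 :=
    Complex.arg_eq_pi_div_two_iff.2 ⟨h, h2⟩
  rw [sphTheta, if_neg (fun hc => h2.ne' hc.2), harg,
    if_neg (not_lt.2 (by positivity))]

lemma phi_of_norm_one {q : ℍ[ℝ]} (h : ‖q‖ = 1) (hq : q ≠ 0) :
    sphPhi q = Real.arccos q.imK := by
  rw [sphPhi, if_neg hq, h, div_one]

/-- The spherical product is not associative: a concrete counterexample. -/
theorem sprod_not_associative :
    sprod (⟨0, 0, 1, 0⟩ : ℍ[ℝ])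
        (sprod (⟨0, 0, Real.sqrt 2 / 2, -(Real.sqrt 2 / 2)⟩ : ℍ[ℝ])
          (⟨0, 0, Real.sqrt 2 / 2, -(Real.sqrt 2 / 2)⟩ : ℍ[ℝ])) =
      (⟨0, 0, 0, -1⟩ : ℍ[ℝ]) ∧
    sprod (sprod (⟨0, 0, 1, 0⟩ : ℍ[ℝ])
          (⟨0, 0, Real.sqrt 2 / 2, -(Real.sqrt 2 / 2)⟩ : ℍ[ℝ]))
        (⟨0, 0, Real.sqrt 2 / 2, -(Real.sqrt 2 / 2)⟩ : ℍ[ℝ]) =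
      (⟨0, 0, -1, 0⟩ : ℍ[ℝ]) := by
  set s : ℝ := Real.sqrt 2 / 2 with hs
  have hspos : 0 < s := by rw [hs]; positivity
  have hs2 : s ^ 2 = 1 / 2 := by
    rw [hs, div_pow, Real.sq_sqrt (by norm_num : (2:ℝ) ≥ 0)]; norm_num
  set q1 : ℍ[ℝ] := ⟨0, 0, s, -s⟩ with hq1
  set qj : ℍ[ℝ] := ⟨0, 0, 1, 0⟩ with hqj
  -- norms
  have hnq1 : ‖q1‖ = 1 := by
    rw [norm_mk']
    show Real.sqrt (0^2 + 0^2 + s^2 + (-s)^2) = 1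
    rw [neg_pow]
    simp [hs2]
    norm_num
  have hnqj : ‖qj‖ = 1 := by
    rw [norm_mk']
    show Real.sqrt (0^2 + 0^2 + 1^2 + 0^2) = 1
    norm_num
  have hq1ne : q1 ≠ 0 := ne_zero_of_imJ (q := q1) hspos.ne'
  have hqjne : qj ≠ 0 := ne_zero_of_imJ (q := qj) one_ne_zero
  -- angles of q1
  have hθ1 : sphTheta q1 = Real.pi / 2 := theta_pos_J rfl hspos
  have harcs : Real.arccos s = Real.pi / 4 := by
    rw [hs, ← Real.cos_pi_div_four, Real.arccos_cos (by positivity)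
      (by linarith [Real.pi_pos])]
  have hφ1 : sphPhi q1 = Real.pi - Real.pi / 4 := by
    rw [phi_of_norm_one hnq1 hq1ne]
    show Real.arccos (-s) = _
    rw [Real.arccos_neg, harcs]
  -- angles of qj
  have hθj : sphTheta qj = Real.pi / 2 := theta_pos_J rfl one_pos
  have hφj : sphPhi qj = Real.pi / 2 := by
    rw [phi_of_norm_one hnqj hqjne]
    show Real.arccos 0 = _
    exact Real.arccos_zero
  -- step A : q1 ×ₛ q1 = i
  have hA : sprod q1 q1 = ⟨0, 1, 0, 0⟩ := by
    rw [sprod]; simp only [sphRho]; rw [hnq1, hθ1, hφ1]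
    have e1 : Real.pi / 2 + Real.pi / 2 = Real.pi := by ring
    have e2 : (Real.pi - Real.pi / 4) + (Real.pi - Real.pi / 4)
        = Real.pi / 2 + Real.pi := by ring
    rw [e1, e2, sCoord]
    apply Quaternion.ext <;>
      simp [Real.sin_add_pi, Real.cos_add_pi]
  set qi : ℍ[ℝ] := ⟨0, 1, 0, 0⟩ with hqi
  have hnqi : ‖qi‖ = 1 := by
    rw [norm_mk']
    show Real.sqrt (0^2 + 1^2 + 0^2 + 0^2) = 1
    norm_num
  have hqine : qi ≠ 0 := ne_zero_of_imI (q := qi) one_ne_zero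
  have hθi : sphTheta qi = 0 := theta_pos_I one_pos rfl
  have hφi : sphPhi qi = Real.pi / 2 := by
    rw [phi_of_norm_one hnqi hqine]
    show Real.arccos 0 = _
    exact Real.arccos_zero
  -- step B : qj ×ₛ i = -k
  have hB : sprod qj qi = ⟨0, 0, 0, -1⟩ := by
    rw [sprod]; simp only [sphRho]; rw [hnqj, hnqi, hθj, hθi, hφj, hφi]
    have e1 : Real.pi / 2 + 0 = Real.pi / 2 := by ring
    have e2 : Real.pi / 2 + Real.pi / 2 = Real.pi := by ring
    rw [e1, e2, sCoord]
    apply Quaternion.ext <;> simp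
  -- step C : qj ×ₛ q1 = ⟨0, s, 0, -s⟩
  have hC : sprod qj q1 = ⟨0, s, 0, -s⟩ := by
    rw [sprod]; simp only [sphRho]; rw [hnqj, hnq1, hθj, hθ1, hφj, hφ1]
    have e1 : Real.pi / 2 + Real.pi / 2 = Real.pi := by ring
    have e2 : Real.pi / 2 + (Real.pi - Real.pi / 4)
        = Real.pi / 4 + Real.pi := by ring
    rw [e1, e2, sCoord]
    apply Quaternion.ext <;>
      simp [Real.sin_add_pi, Real.cos_add_pi, Real.sin_pi_div_four,
        Real.cos_pi_div_four, hs]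
  set qr : ℍ[ℝ] := ⟨0, s, 0, -s⟩ with hqr
  have hnqr : ‖qr‖ = 1 := by
    rw [norm_mk']
    show Real.sqrt (0^2 + s^2 + 0^2 + (-s)^2) = 1
    rw [neg_pow]
    simp [hs2]
    norm_num
  have hqrne : qr ≠ 0 := ne_zero_of_imI (q := qr) hspos.ne'
  have hθr : sphTheta qr = 0 := theta_pos_I hspos rfl
  have hφr : sphPhi qr = Real.pi - Real.pi / 4 := by
    rw [phi_of_norm_one hnqr hqrne]
    show Real.arccos (-s) = _
    rw [Real.arccos_neg, harcs]
  -- step D : qr ×ₛ q1 = -j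
  have hD : sprod qr q1 = ⟨0, 0, -1, 0⟩ := by
    rw [sprod]; simp only [sphRho]; rw [hnqr, hnq1, hθr, hθ1, hφr, hφ1]
    have e1 : (0:ℝ) + Real.pi / 2 = Real.pi / 2 := by ring
    have e2 : (Real.pi - Real.pi / 4) + (Real.pi - Real.pi / 4)
        = Real.pi / 2 + Real.pi := by ring
    rw [e1, e2, sCoord]
    apply Quaternion.ext <;>
      simp [Real.sin_add_pi, Real.cos_add_pi]
  exact ⟨by rw [hA, hB], by rw [hC, hD]⟩
end

section
/- Let c be a pure quaternion with ‖c‖ > 2 and let Q_c(q) = sp_2(q) + c. Then for all n ≥ 1, the n-th iterate satisfies ‖Q_c^(n)(0)‖ ≥ ‖c‖(‖c‖ − 1)^(n−1). -/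
open scoped Quaternion
open Bornology

lemma norm_sCoord (ρ θ φ : ℝ) : ‖sCoord ρ θ φ‖ = |ρ| := by
  have h1 : Quaternion.normSq (sCoord ρ θ φ) = ρ ^ 2 := by
    rw [Quaternion.normSq_def', sCoord]
    simp only
    rw [show (0:ℝ)^2 + (ρ * (Real.sin φ * Real.cos θ))^2 + (ρ * (Real.sin φ * Real.sin θ))^2
        + (ρ * Real.cos φ)^2
        = ρ^2*(Real.sin φ^2*(Real.sin θ^2+Real.cos θ^2)) + ρ^2*Real.cos φ^2 by ring,
      Real.sin_sq_add_cos_sq,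
      show ρ^2*(Real.sin φ^2*1) + ρ^2*Real.cos φ^2 = ρ^2*(Real.sin φ^2+Real.cos φ^2) by ring,
      Real.sin_sq_add_cos_sq]
    ring
  have h2 : ‖sCoord ρ θ φ‖ * ‖sCoord ρ θ φ‖ = ρ ^ 2 := by
    rw [← Quaternion.normSq_eq_norm_mul_self, h1]
  calc ‖sCoord ρ θ φ‖ = Real.sqrt (‖sCoord ρ θ φ‖ * ‖sCoord ρ θ φ‖) := by
        rw [Real.sqrt_mul_self (norm_nonneg _)]
    _ = |ρ| := by rw [h2, Real.sqrt_sq_eq_abs]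

lemma norm_spow_two (q : ℍ[ℝ]) : ‖spow 2 q‖ = ‖q‖ ^ 2 := by
  rw [spow, norm_sCoord, sphRho, abs_of_nonneg (by positivity)]

/-- Lower bound on the iterates when ‖c‖ > 2. -/
theorem iterate_lower_bound (c : ℍ[ℝ]) (hc : c.re = 0) (h : ‖c‖ > 2) :
    ∀ n : ℕ, 1 ≤ n →
      ‖(fun q : ℍ[ℝ] => spow 2 q + c)^[n] 0‖ ≥ ‖c‖ * (‖c‖ - 1) ^ (n - 1) := by
  intro n hn
  induction n, hn using Nat.le_induction with
  | base =>
    simp only [Function.iterate_one]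
    have h0 : ‖spow 2 (0:ℍ[ℝ]) + c‖ ≥ ‖c‖ - ‖spow 2 (0:ℍ[ℝ])‖ := by
      have := norm_sub_le (spow 2 (0:ℍ[ℝ]) + c) (spow 2 (0:ℍ[ℝ]))
      simp only [add_sub_cancel_left] at this
      linarith
    rw [norm_spow_two] at h0
    simpa using h0
  | succ n hn ih =>
    rw [Function.iterate_succ_apply']
    set x := (fun q : ℍ[ℝ] => spow 2 q + c)^[n] 0 with hxdef
    have hlow : ‖spow 2 x + c‖ ≥ ‖x‖ ^ 2 - ‖c‖ := by
      have := norm_sub_le (spow 2 x + c) c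
      simp only [add_sub_cancel_right] at this
      rw [norm_spow_two] at this
      linarith
    have hK1 : (1:ℝ) ≤ (‖c‖ - 1) ^ (n - 1) := one_le_pow₀ (by linarith)
    have hxc : ‖x‖ ≥ ‖c‖ := le_trans (by nlinarith [norm_nonneg c]) ih
    have hpow : (‖c‖ - 1) ^ (n - 1) * (‖c‖ - 1) = (‖c‖ - 1) ^ n := by
      rw [← pow_succ]; congr 1; omega
    have key : ‖x‖ ^ 2 - ‖c‖ ≥ ‖c‖ * (‖c‖ - 1) ^ n := by
      nlinarith [ih, norm_nonneg x]
    simpa using le_trans key hlow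
end

section
/- Let c be a pure quaternion with ‖c‖ ≤ 2, Q_c(q) = sp_2(q) + c, and suppose ‖Q_c^(m)(0)‖ = 2 + δ for some m ≥ 1 and δ > 0. Then for every n ≥ 1, ‖Q_c^(m+n)(0)‖ ≥ 2 + 4^n δ. -/
open scoped Quaternion
open Bornology

/-!
Only ‖sp₂(q)‖ = ‖q‖² matters. If ‖q‖ ≥ 2 + ε with ε ≥ 0 and ‖c‖ ≤ 2, then
‖sp₂(q) + c‖ ≥ (2 + ε)² - 2 ≥ 2 + 4ε, so each further step multiplies the excess over 2
by at least 4.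
-/

lemma normSq_sCoord (ρ θ φ : ℝ) : Quaternion.normSq (sCoord ρ θ φ) = ρ ^ 2 := by
  have hθ := Real.cos_sq_add_sin_sq θ
  have hφ := Real.sin_sq_add_cos_sq φ
  rw [Quaternion.normSq_def']
  dsimp only [sCoord]
  linear_combination ρ ^ 2 * Real.sin φ ^ 2 * hθ + ρ ^ 2 * hφ

lemma norm_spow (n : ℕ) (q : ℍ[ℝ]) : ‖spow n q‖ = ‖q‖ ^ n := by
  rw [spow, norm_sCoord, sphRho, abs_of_nonneg (by positivity)]

lemma two_add_four_mul_le_norm_spow_two_add {c : ℍ[ℝ]} (hc : ‖c‖ ≤ 2) {q : ℍ[ℝ]} {ε : ℝ}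
    (hε : 0 ≤ ε) (hq : 2 + ε ≤ ‖q‖) : 2 + 4 * ε ≤ ‖spow 2 q + c‖ :=
  calc 2 + 4 * ε ≤ (2 + ε) ^ 2 - 2 := by nlinarith
    _ ≤ ‖q‖ ^ 2 - ‖c‖ := by gcongr
    _ = ‖spow 2 q‖ - ‖-c‖ := by rw [norm_spow, norm_neg]
    _ ≤ ‖spow 2 q + c‖ := by simpa using norm_sub_norm_le (spow 2 q) (-c)

lemma two_add_four_pow_mul_le_iterate {α : Type*} {f : α → α} {g : α → ℝ}
    (hf : ∀ x ε, 0 ≤ ε → 2 + ε ≤ g x → 2 + 4 * ε ≤ g (f x))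
    {x : α} {ε : ℝ} (hε : 0 ≤ ε) (hx : 2 + ε ≤ g x) (n : ℕ) :
    2 + 4 ^ n * ε ≤ g (f^[n] x) := by
  induction n with
  | zero => simpa using hx
  | succ n ih =>
    rw [Function.iterate_succ_apply', pow_succ', mul_assoc]
    exact hf _ _ (by positivity) ih

theorem iterate_escape_general (c : ℍ[ℝ]) (hc2 : ‖c‖ ≤ 2)
    (δ : ℝ) (hδ : δ > 0) (m : ℕ)
    (h : ‖(fun q : ℍ[ℝ] => spow 2 q + c)^[m] 0‖ = 2 + δ) :
    ∀ n : ℕ, 1 ≤ n →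
      ‖(fun q : ℍ[ℝ] => spow 2 q + c)^[m + n] 0‖ ≥ 2 + 4 ^ n * δ := by
  intro n _
  rw [add_comm, Function.iterate_add_apply]
  exact two_add_four_pow_mul_le_iterate
    (fun _ _ hε hq => two_add_four_mul_le_norm_spow_two_add hc2 hε hq) hδ.le h.ge n

/-- Escape growth: once an iterate exceeds 2 in norm, later iterates grow. -/
theorem iterate_escape (c : ℍ[ℝ]) (hc : c.re = 0) (hc2 : ‖c‖ ≤ 2)
    (δ : ℝ) (hδ : δ > 0) (m : ℕ) (hm : 1 ≤ m)
    (h : ‖(fun q : ℍ[ℝ] => spow 2 q + c)^[m] 0‖ = 2 + δ) :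
    ∀ n : ℕ, 1 ≤ n →
      ‖(fun q : ℍ[ℝ] => spow 2 q + c)^[m + n] 0‖ ≥ 2 + 4 ^ n * δ :=
  iterate_escape_general c hc2 δ hδ m h
end

section
/- Let m ≥ 2 and let c be a pure quaternion with ‖c‖^(m−1) > 2. Then for all n ≥ 1 the iterates of Q_{m,c}(q) = sp_m(q) + c satisfy ‖Q_{m,c}^(n)(0)‖ ≥ ‖c‖(‖c‖^(m−1) − 1)^(n−1). -/
open scoped Quaternion
open Bornology

lemma sCoord_zero (θ φ : ℝ) : sCoord 0 θ φ = 0 := by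
  simp [sCoord]; rfl

/-- Degree-m version of the iterate lower bound. -/
theorem iterate_lower_bound_deg (m : ℕ) (hm : 2 ≤ m) (c : ℍ[ℝ]) (hc : c.re = 0)
    (h : ‖c‖ ^ (m - 1) > 2) :
    ∀ n : ℕ, 1 ≤ n →
      ‖(fun q : ℍ[ℝ] => spow m q + c)^[n] 0‖ ≥
        ‖c‖ * (‖c‖ ^ (m - 1) - 1) ^ (n - 1) := by
  intro n hn
  set f : ℍ[ℝ] → ℍ[ℝ] := fun q => spow m q + c with hf
  have hc1 : (1:ℝ) < ‖c‖ := by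
    by_contra hle
    push_neg at hle
    have : ‖c‖ ^ (m - 1) ≤ 1 := pow_le_one₀ (norm_nonneg c) hle
    linarith
  have hb : (1:ℝ) < ‖c‖ ^ (m - 1) - 1 := by linarith
  induction n with
  | zero => omega
  | succ n ih =>
    rcases Nat.eq_zero_or_pos n with h0 | hpos
    · subst h0
      have : f^[1] 0 = c := by
        simp only [Function.iterate_one, hf, spow, sphRho, norm_zero,
          zero_pow (by omega : m ≠ 0), sCoord_zero, zero_add]
      rw [this]
      simp
    · have ihn := ih hpos
      set x := f^[n] 0 with hx
      have hxc : ‖x‖ ≥ ‖c‖ := by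
        calc ‖x‖ ≥ ‖c‖ * (‖c‖ ^ (m - 1) - 1) ^ (n - 1) := ihn
          _ ≥ ‖c‖ * 1 := by
              apply mul_le_mul_of_nonneg_left _ (norm_nonneg c)
              exact one_le_pow₀ (le_of_lt hb)
          _ = ‖c‖ := mul_one _
      have step : ‖f^[n+1] 0‖ ≥ ‖x‖ ^ m - ‖c‖ := by
        rw [Function.iterate_succ_apply', ← hx]
        calc ‖f x‖ = ‖spow m x + c‖ := rfl
          _ ≥ ‖spow m x‖ - ‖c‖ := by
              have := norm_sub_norm_le (spow m x) (-c)
              simpa [sub_neg_eq_add] using this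
          _ = ‖x‖ ^ m - ‖c‖ := by rw [norm_spow]
      have hm1 : ‖x‖ ^ m = ‖x‖ * ‖x‖ ^ (m - 1) := by
        rw [← pow_succ']
        congr 1
        omega
      have hpow : ‖x‖ ^ (m - 1) ≥ ‖c‖ ^ (m - 1) :=
        pow_le_pow_left₀ (norm_nonneg c) hxc _
      have h1 : ‖x‖ ^ m - ‖c‖ ≥ ‖x‖ * (‖c‖ ^ (m - 1) - 1) := by
        rw [hm1]
        have : ‖x‖ * ‖c‖ ^ (m - 1) ≤ ‖x‖ * ‖x‖ ^ (m - 1) :=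
          mul_le_mul_of_nonneg_left hpow (le_trans (norm_nonneg c) hxc)
        nlinarith
      have h2 : ‖x‖ * (‖c‖ ^ (m - 1) - 1) ≥
          ‖c‖ * (‖c‖ ^ (m - 1) - 1) ^ (n - 1) * (‖c‖ ^ (m - 1) - 1) :=
        mul_le_mul_of_nonneg_right ihn (by linarith)
      have h3 : ‖c‖ * (‖c‖ ^ (m - 1) - 1) ^ (n - 1) * (‖c‖ ^ (m - 1) - 1)
          = ‖c‖ * (‖c‖ ^ (m - 1) - 1) ^ n := by
        rw [mul_assoc, ← pow_succ]
        congr 2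
        omega
      have : (n + 1) - 1 = n := rfl
      rw [this]
      linarith
end

section
/- For m ≥ 2, a pure quaternion c belongs to the degree-m spherical Mandelbrot set if and only if ‖Q_{m,c}^(n)(0)‖ ≤ 2^(1/(m−1)) for all n. -/
open scoped Quaternion
open Bornology

lemma spow_zero' (n : ℕ) (hn : n ≠ 0) : spow n (0 : ℍ[ℝ]) = 0 := by
  rw [spow, sphRho, norm_zero, zero_pow hn, sCoord_zero]

/-- Membership in the degree-m spherical Mandelbrot set is equivalent to all
iterates being bounded by 2^(1/(m-1)) in norm. -/
theorem spherical_mandelbrot_deg_iff (m : ℕ) (hm : 2 ≤ m) (c : ℍ[ℝ])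
    (hc : c.re = 0) :
    Bornology.IsBounded
        (Set.range fun n : ℕ => (fun q : ℍ[ℝ] => spow m q + c)^[n] 0) ↔
      ∀ n : ℕ, ‖(fun q : ℍ[ℝ] => spow m q + c)^[n] 0‖ ≤
        (2 : ℝ) ^ ((1 : ℝ) / (m - 1)) := by
  set f : ℍ[ℝ] → ℍ[ℝ] := fun q => spow m q + c with hf
  set R : ℝ := (2 : ℝ) ^ ((1 : ℝ) / ((m : ℝ) - 1)) with hR
  have hm1 : (1:ℕ) ≤ m := le_trans (by norm_num) hm
  have hcast : ((m - 1 : ℕ) : ℝ) = (m : ℝ) - 1 := by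
    push_cast [Nat.cast_sub hm1]; ring
  have hm2 : (2 : ℝ) ≤ (m : ℝ) := by exact_mod_cast hm
  have hmne : (m : ℝ) - 1 ≠ 0 := by linarith
  have hRpow : R ^ (m - 1) = 2 := by
    rw [hR, ← Real.rpow_natCast ((2:ℝ) ^ ((1:ℝ)/((m:ℝ)-1))) (m-1),
      ← Real.rpow_mul (by norm_num), hcast, one_div, inv_mul_cancel₀ hmne, Real.rpow_one]
  have hR1 : 1 < R := by
    apply Real.one_lt_rpow (by norm_num)
    have : 0 < (m : ℝ) - 1 := by linarith
    positivity
  have hR0 : 0 < R := lt_trans one_pos hR1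
  -- lower bound for one application of f
  have hstep : ∀ w : ℍ[ℝ], ‖w‖ ^ m - ‖c‖ ≤ ‖f w‖ := by
    intro w
    have h1 : ‖spow m w‖ - ‖(-c : ℍ[ℝ])‖ ≤ ‖spow m w - (-c)‖ := norm_sub_norm_le _ _
    rw [sub_neg_eq_add, norm_neg, norm_spow] at h1
    exact h1
  -- growth lemma
  have grow : ∀ a : ℍ[ℝ], ‖c‖ ≤ ‖a‖ → R < ‖a‖ →
      ∀ j : ℕ, (‖a‖ ^ (m - 1) - 1) ^ j * ‖a‖ ≤ ‖f^[j] a‖ := by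
    intro a hca hRa
    set lam : ℝ := ‖a‖ ^ (m - 1) - 1 with hlam
    have hlam1 : 1 < lam := by
      have h2 : R ^ (m-1) < ‖a‖ ^ (m-1) := by
        apply pow_lt_pow_left₀ hRa (le_of_lt hR0)
        omega
      rw [hRpow] at h2
      simp only [hlam]; linarith
    intro j
    induction j with
    | zero => simp
    | succ j ih =>
      set w := f^[j] a with hw
      have h1 : (1:ℝ) ≤ lam ^ j := one_le_pow₀ hlam1.le
      have haw : ‖a‖ ≤ ‖w‖ := by nlinarith [norm_nonneg a]
      have hwpow : lam ≤ ‖w‖ ^ (m-1) - 1 := by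
        have := pow_le_pow_left₀ (norm_nonneg a) haw (m-1)
        simp only [hlam]; linarith
      have hpowm : ‖w‖ ^ m = ‖w‖ ^ (m-1) * ‖w‖ := by
        rw [← pow_succ]; congr 1; omega
      have key : (lam ^ j * ‖a‖) * lam ≤ ‖w‖ * (‖w‖ ^ (m-1) - 1) :=
        mul_le_mul ih hwpow (by linarith) (norm_nonneg w)
      have hfw := hstep w
      rw [Function.iterate_succ_apply', ← hw, pow_succ]
      nlinarith [key, hfw, hca, haw, hpowm]
  constructor
  · intro hb n
    by_contra hgt
    push_neg at hgt
    obtain ⟨C, hC⟩ := isBounded_iff_forall_norm_le.mp hb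
    have hCk : ∀ k : ℕ, ‖f^[k] (0:ℍ[ℝ])‖ ≤ C := fun k => hC _ ⟨k, rfl⟩
    -- choose a starting point a = f^[k] 0 with ‖c‖ ≤ ‖a‖ and R < ‖a‖
    obtain ⟨k, hca, hRa⟩ : ∃ k : ℕ, ‖c‖ ≤ ‖f^[k] (0:ℍ[ℝ])‖ ∧ R < ‖f^[k] (0:ℍ[ℝ])‖ := by
      by_cases hcc : ‖c‖ ≤ ‖f^[n] (0:ℍ[ℝ])‖
      · exact ⟨n, hcc, hgt⟩
      · push_neg at hcc
        have h1 : f^[1] (0:ℍ[ℝ]) = c := by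
          simp [hf, spow_zero' m (by omega)]
        refine ⟨1, by rw [h1], ?_⟩
        rw [h1]; exact lt_trans hgt hcc
    set a := f^[k] (0:ℍ[ℝ]) with ha
    have ha0 : 0 < ‖a‖ := lt_trans hR0 hRa
    set lam : ℝ := ‖a‖ ^ (m - 1) - 1 with hlam
    have hlam1 : 1 < lam := by
      have h2 : R ^ (m-1) < ‖a‖ ^ (m-1) := by
        apply pow_lt_pow_left₀ hRa (le_of_lt hR0)
        omega
      rw [hRpow] at h2
      simp only [hlam]; linarith
    obtain ⟨j, hj⟩ := pow_unbounded_of_one_lt (C / ‖a‖) hlam1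
    have hjC : C < lam ^ j * ‖a‖ := by
      rwa [div_lt_iff₀ ha0] at hj
    have hle : lam ^ j * ‖a‖ ≤ ‖f^[j] a‖ := grow a hca hRa j
    have : ‖f^[j] a‖ ≤ C := by
      rw [ha, ← Function.iterate_add_apply]
      exact hCk (j + k)
    linarith
  · intro h
    exact isBounded_iff_forall_norm_le.mpr ⟨R, by rintro x ⟨n, rfl⟩; exact h n⟩
end

section
/- Let q = q₀ + q₁i + q₂j + q₃k be a quaternion and set ρ = √(q₁² + q₂² + q₃²). Then q belongs to the quaternionic Mandelbrot set (i.e., the iterates of P_q(z) = z² + q starting at 0 are bounded) if and only if the complex number c = q₀ + ρi belongs to the classical Mandelbrot set. -/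
/-!
A quaternion `q` lies in the real subalgebra spanned by `1` and a unit pure quaternion `u`
(`u = q.im / ‖q.im‖` when `q.im ≠ 0`). Since `u * u = -1`, sending `i ↦ u` is an isometric
`ℝ`-algebra embedding `ℂ → ℍ` mapping `q.re + ‖q.im‖ i` to `q`. Algebra homomorphisms intertwine
the two iterations of `z ↦ z ^ 2 + c`, and isometries preserve boundedness.
-/

open scoped Quaternion

theorem Isometry.isBounded_image_iff {α β : Type*} [PseudoMetricSpace α] [PseudoMetricSpace β]
    {f : α → β} (hf : Isometry f) {s : Set α} :
    Bornology.IsBounded (f '' s) ↔ Bornology.IsBounded s := by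
  rw [Metric.isBounded_iff_ediam_ne_top, Metric.isBounded_iff_ediam_ne_top, hf.ediam_image]

theorem map_iterate_sq_add_zero {F R S : Type*} [Semiring R] [Semiring S] [FunLike F R S]
    [RingHomClass F R S] (f : F) (c : R) (n : ℕ) :
    f ((fun z => z ^ 2 + c)^[n] 0) = (fun z => z ^ 2 + f c)^[n] 0 := by
  have : Function.Semiconj f (fun z => z ^ 2 + c) (fun z => z ^ 2 + f c) := fun z => by simp
  rw [this.iterate_right n, map_zero]

namespace Quaternion

theorem mul_self_eq_neg_one_of_re_eq_zero {u : ℍ[ℝ]} (hre : u.re = 0) (hu : ‖u‖ = 1) :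
    u * u = -1 := by
  rw [← sq, sq_eq_neg_normSq.2 hre, normSq_eq_norm_mul_self, hu]; simp

theorem norm_liftAux {u : ℍ[ℝ]} (hre : u.re = 0) (hu : ‖u‖ = 1) (z : ℂ) :
    ‖Complex.liftAux u (mul_self_eq_neg_one_of_re_eq_zero hre hu) z‖ = ‖z‖ := by
  have hsq : u.imI ^ 2 + u.imJ ^ 2 + u.imK ^ 2 = 1 := by
    have := normSq_eq_norm_mul_self u
    rw [hu, normSq_def', hre] at this; linarith
  rw [← sq_eq_sq₀ (norm_nonneg _) (norm_nonneg _), sq, ← normSq_eq_norm_mul_self, Complex.sq_norm,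
    Complex.liftAux_apply, normSq_def', Complex.normSq_apply]
  simp only [algebraMap_def, re_add, re_coe, re_smul, hre, smul_eq_mul, mul_zero, add_zero,
    imI_add, imI_coe, imI_smul, zero_add, imJ_add, imJ_coe, imJ_smul, imK_add, imK_coe, imK_smul]
  linear_combination z.im ^ 2 * hsq

theorem exists_im_eq_norm_smul (q : ℍ[ℝ]) :
    ∃ u : ℍ[ℝ], u.re = 0 ∧ ‖u‖ = 1 ∧ q.im = ‖q.im‖ • u := by
  by_cases h : q.im = 0
  -- `show` keeps the literal at type `ℍ[ℝ]` rather than the underlying `QuaternionAlgebra`.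
  · refine ⟨show ℍ[ℝ] from ⟨0, 1, 0, 0⟩, rfl, ?_, by rw [h, norm_zero, zero_smul]⟩
    rw [← sq_eq_sq₀ (norm_nonneg _) zero_le_one, sq, ← normSq_eq_norm_mul_self, normSq_def']
    norm_num
  · refine ⟨‖q.im‖⁻¹ • q.im, by simp, by simp [norm_smul, h], by simp [smul_smul, h]⟩

theorem norm_im_eq_sqrt (q : ℍ[ℝ]) : ‖q.im‖ = √(q.imI ^ 2 + q.imJ ^ 2 + q.imK ^ 2) := by
  rw [← Real.sqrt_sq (norm_nonneg _), sq, ← normSq_eq_norm_mul_self, normSq_def']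
  simp

theorem exists_isometry_algHom_apply_eq (q : ℍ[ℝ]) :
    ∃ f : ℂ →ₐ[ℝ] ℍ[ℝ], Isometry f ∧ f ⟨q.re, ‖q.im‖⟩ = q := by
  obtain ⟨u, hre, hu, him⟩ := q.exists_im_eq_norm_smul
  refine ⟨Complex.liftAux u (mul_self_eq_neg_one_of_re_eq_zero hre hu),
    AddMonoidHomClass.isometry_of_norm _ (norm_liftAux hre hu), ?_⟩
  rw [Complex.liftAux_apply, ← him]
  exact q.re_add_im

end Quaternion

/-- A quaternion q is in the quaternionic Mandelbrot set iff the complex number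
q.re + ρ i, with ρ the norm of the vector part, is in the classical Mandelbrot set. -/
theorem quaternionic_mandelbrot_iff (q : ℍ[ℝ]) :
    Bornology.IsBounded
        (Set.range fun n : ℕ => (fun z : ℍ[ℝ] => z ^ 2 + q)^[n] 0) ↔
      Bornology.IsBounded
        (Set.range fun n : ℕ =>
          (fun z : ℂ => z ^ 2 +
            ((q.re : ℂ) +
              (Real.sqrt (q.imI ^ 2 + q.imJ ^ 2 + q.imK ^ 2) : ℝ) * Complex.I))^[n] 0) := by
  obtain ⟨f, hf, hfq⟩ := q.exists_isometry_algHom_apply_eq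
  have hc : (q.re : ℂ) + (√(q.imI ^ 2 + q.imJ ^ 2 + q.imK ^ 2) : ℝ) * Complex.I =
      ⟨q.re, ‖q.im‖⟩ := by
    rw [Quaternion.norm_im_eq_sqrt]
    apply Complex.ext <;> simp
  rw [hc, ← hf.isBounded_image_iff, ← Set.range_comp]
  simp only [Function.comp_def, map_iterate_sq_add_zero, hfq]
end

section
/- For every pure quaternion q with spherical representation q = ρ(i sin φ cos θ + j sin φ sin θ + k cos φ), the modified spherical square q ×ₛ^{(1,2)} q := ρ²(i sin φ cos 2θ + j sin φ sin 2θ + k cos φ) equals the quaternionic product ρ(cos(θ/2) + k sin(θ/2)) · q · (cos(θ/2) − k sin(θ/2)). -/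
open scoped Quaternion
open Bornology

def qmk (a b c d : ℝ) : ℍ[ℝ] := ⟨a, b, c, d⟩

/-!
For a pure quaternion the spherical coordinates reconstruct `q`: `θ` is an argument of
`imI + imJ • I` and `ρ sin φ` is its modulus. Conjugation by `cos α + k sin α` fixes `k` and
rotates the `ij`-plane by `2α`, so with `α = θ / 2` it turns azimuth `θ` into `2θ`.
-/

open Real

def imIJ (q : ℍ[ℝ]) : ℂ := ⟨q.imI, q.imJ⟩

lemma sq_norm_eq_re_sq_add_sq_norm_imIJ_add_imK_sq (q : ℍ[ℝ]) :
    ‖q‖ ^ 2 = q.re ^ 2 + ‖imIJ q‖ ^ 2 + q.imK ^ 2 := by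
  rw [sq, ← Quaternion.normSq_eq_norm_mul_self, Quaternion.normSq_def', Complex.sq_norm, imIJ,
    Complex.normSq_mk]
  ring

-- When `imIJ q = 0` the definition picks `0`, which is also `arg 0`.
lemma sphTheta_eq_arg_imIJ_or (q : ℍ[ℝ]) :
    sphTheta q = (imIJ q).arg ∨ sphTheta q = (imIJ q).arg + 2 * π := by
  unfold sphTheta
  split_ifs with hzero
  · left
    rw [imIJ, hzero.1, hzero.2]
    exact Complex.arg_zero.symm
  · exact Or.inr rfl
  · exact Or.inl rfl

lemma norm_imIJ_mul_cos_sphTheta (q : ℍ[ℝ]) : ‖imIJ q‖ * cos (sphTheta q) = q.imI := by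
  rcases sphTheta_eq_arg_imIJ_or q with h | h <;>
    rw [h] <;> simp only [cos_add_two_pi, Complex.norm_mul_cos_arg] <;> rfl

lemma norm_imIJ_mul_sin_sphTheta (q : ℍ[ℝ]) : ‖imIJ q‖ * sin (sphTheta q) = q.imJ := by
  rcases sphTheta_eq_arg_imIJ_or q with h | h <;>
    rw [h] <;> simp only [sin_add_two_pi, Complex.norm_mul_sin_arg] <;> rfl

lemma sin_sphPhi_nonneg (q : ℍ[ℝ]) : 0 ≤ sin (sphPhi q) := by
  unfold sphPhi
  split_ifs
  · simp
  · exact sin_nonneg_of_nonneg_of_le_pi (arccos_nonneg _) (arccos_le_pi _)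

lemma norm_mul_cos_sphPhi (q : ℍ[ℝ]) : ‖q‖ * cos (sphPhi q) = q.imK := by
  by_cases h0 : q = 0
  · simp [h0]
  have hpos : 0 < ‖q‖ := norm_pos_iff.mpr h0
  obtain ⟨hlow, hup⟩ : -‖q‖ ≤ q.imK ∧ q.imK ≤ ‖q‖ :=
    abs_le.mp (abs_le_of_sq_le_sq
      (by nlinarith [sq_norm_eq_re_sq_add_sq_norm_imIJ_add_imK_sq q]) hpos.le)
  rw [sphPhi, if_neg h0, cos_arccos (by rwa [le_div_iff₀ hpos, neg_one_mul])
    (by rwa [div_le_one₀ hpos])]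
  field_simp

lemma norm_mul_sin_sphPhi {q : ℍ[ℝ]} (hq : q.re = 0) : ‖q‖ * sin (sphPhi q) = ‖imIJ q‖ := by
  refine (sq_eq_sq₀ (mul_nonneg (norm_nonneg q) (sin_sphPhi_nonneg q)) (norm_nonneg _)).mp ?_
  calc (‖q‖ * sin (sphPhi q)) ^ 2 = ‖q‖ ^ 2 - (‖q‖ * cos (sphPhi q)) ^ 2 := by
        linear_combination ‖q‖ ^ 2 * sin_sq_add_cos_sq (sphPhi q)
    _ = ‖imIJ q‖ ^ 2 := by
        rw [norm_mul_cos_sphPhi, sq_norm_eq_re_sq_add_sq_norm_imIJ_add_imK_sq, hq]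
        ring

lemma sCoord_sphRho_sphTheta_sphPhi {q : ℍ[ℝ]} (hq : q.re = 0) :
    sCoord (sphRho q) (sphTheta q) (sphPhi q) = q := by
  ext
  · exact hq.symm
  · simp only [sCoord, sphRho]
    rw [← mul_assoc, norm_mul_sin_sphPhi hq, norm_imIJ_mul_cos_sphTheta]
  · simp only [sCoord, sphRho]
    rw [← mul_assoc, norm_mul_sin_sphPhi hq, norm_imIJ_mul_sin_sphTheta]
  · exact norm_mul_cos_sphPhi q

lemma smul_sCoord (r ρ θ φ : ℝ) : r • sCoord ρ θ φ = sCoord (r * ρ) θ φ := by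
  ext <;> simp only [Quaternion.re_smul, Quaternion.imI_smul, Quaternion.imJ_smul,
    Quaternion.imK_smul] <;> simp [sCoord, mul_assoc]

lemma qmk_mul_sCoord_mul_qmk (ρ θ φ α : ℝ) :
    qmk (cos α) 0 0 (sin α) * sCoord ρ θ φ * qmk (cos α) 0 0 (-sin α) =
      sCoord ρ (θ + 2 * α) φ := by
  ext <;> simp only [Quaternion.re_mul, Quaternion.imI_mul, Quaternion.imJ_mul,
    Quaternion.imK_mul] <;> simp only [qmk, sCoord, cos_add, sin_add, cos_two_mul', sin_two_mul]
  · ring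
  · ring
  · ring
  · linear_combination ρ * cos φ * sin_sq_add_cos_sq α

/-- The modified spherical square ×ₛ^{(1,2)} equals a quaternionic rotation
product: q ×ₛ^{(1,2)} q = ρ(cos(θ/2) + k sin(θ/2)) q (cos(θ/2) − k sin(θ/2)). -/
theorem sprod12_eq_quaternionic_rotation (q : ℍ[ℝ]) (hq : q.re = 0) :
    sCoord (sphRho q ^ 2) (2 * sphTheta q) (sphPhi q) =
      (sphRho q) •
        (qmk (Real.cos (sphTheta q / 2)) 0 0 (Real.sin (sphTheta q / 2)) *
          q *
          qmk (Real.cos (sphTheta q / 2)) 0 0 (-Real.sin (sphTheta q / 2))) := by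
  have hrot := qmk_mul_sCoord_mul_qmk (sphRho q) (sphTheta q) (sphPhi q) (sphTheta q / 2)
  rw [sCoord_sphRho_sphTheta_sphPhi hq] at hrot
  rw [hrot, smul_sCoord]
  congr 1 <;> ring
end
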